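/- arXiv:1804.06801 — 4 statements merged into one kernel-verified Lean document; each statement's English description precedes it below -/
import Mathlib

section
/- Let g(x) = 1 + b₁x + b₂x² + ... be a formal power series over ℤ with constant term 1, and let A be the lower-triangular Toeplitz matrix (Appell Riordan array) with A(n,k) = coefficient of x^(n−k) in g for k ≤ n, and 0 otherwise. Then the production matrix P = A · U · A⁻¹ of the matrix M = A⁻¹ satisfies: P(n, n+1) = 1 for all n, P(n, 0) = −b_{n+1} for all n, and P(n, k) = 0 for all other (n,k) with 1 ≤ k ≤ n. -/
/-- Row-finite product of integer matrices indexed by ℕ × ℕ: all matrices in play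
have row `n` supported in `{0, ..., n+1}`, so the truncated sum is exact. -/
def matMul (A B : ℕ → ℕ → ℤ) : ℕ → ℕ → ℤ :=
  fun n k => ∑ j ∈ Finset.range (n + 2), A n j * B j k

/-- The shift matrix `U`. -/
def shiftU : ℕ → ℕ → ℤ := fun i j => if j = i + 1 then 1 else 0

/-- The identity matrix. -/
def matI : ℕ → ℕ → ℤ := fun i j => if i = j then 1 else 0

/-- The lower-triangular Toeplitz (Appell) matrix of a sequence `b` of coefficients. -/
def toeplitz (b : ℕ → ℤ) : ℕ → ℕ → ℤ := fun n k => if k ≤ n then b (n - k) else 0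

lemma AU_eval (b : ℕ → ℤ) (n j : ℕ) (hj : j < n + 2) :
    matMul (toeplitz b) shiftU n j = if 1 ≤ j then toeplitz b n (j - 1) else 0 := by
  unfold matMul shiftU
  cases j with
  | zero => simp
  | succ m =>
    simp only [Nat.succ_sub_one, if_pos (Nat.one_le_iff_ne_zero.mpr (Nat.succ_ne_zero m))]
    rw [Finset.sum_eq_single m]
    · simp
    · intro i _ hi
      simp [Ne.symm (fun h => hi (Nat.succ_injective h)), Ne.symm hi]
    · intro h
      exact absurd (Finset.mem_range.mpr (by omega)) h

lemma key (b : ℕ → ℤ) (N : ℕ → ℕ → ℤ)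
    (hAN : ∀ n k, matMul (toeplitz b) N n k = matI n k) (n k : ℕ) :
    matMul (matMul (toeplitz b) shiftU) N n k = matI (n + 1) k - b (n + 1) * N 0 k := by
  have hL : matMul (matMul (toeplitz b) shiftU) N n k
      = ∑ m ∈ Finset.range (n + 1), toeplitz b n m * N (m + 1) k := by
    show (∑ j ∈ Finset.range (n + 2), matMul (toeplitz b) shiftU n j * N j k) = _
    rw [Finset.sum_congr rfl (fun j hj => by
      rw [AU_eval b n j (Finset.mem_range.mp hj)])]
    rw [Finset.sum_range_succ']
    simp
  have hR := hAN (n + 1) k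
  unfold matMul at hR
  rw [Finset.sum_range_succ'] at hR
  -- hR : ∑ m ∈ range (n+2), toeplitz b (n+1) (m+1) * N (m+1) k
  --        + toeplitz b (n+1) 0 * N 0 k = matI (n+1) k
  rw [Finset.sum_range_succ] at hR
  have h0 : toeplitz b (n + 1) (n + 1 + 1) = 0 := by
    unfold toeplitz; simp
  have h1 : toeplitz b (n + 1) 0 = b (n + 1) := by
    unfold toeplitz; simp
  have h2 : ∀ m ∈ Finset.range (n + 1),
      toeplitz b (n + 1) (m + 1) * N (m + 1) k = toeplitz b n m * N (m + 1) k := by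
    intro m hm
    have hm' := Finset.mem_range.mp hm
    unfold toeplitz
    rw [if_pos (by omega), if_pos (by omega)]
    congr 2
    omega
  rw [h0, h1, Finset.sum_congr rfl h2] at hR
  rw [hL]
  linarith [hR]

/-- For `g(x) = 1 + b₁x + b₂x² + ⋯` with Appell array `A` and `M = A⁻¹`, the
production matrix `P = A·U·A⁻¹` has `P(n,n+1) = 1`, `P(n,0) = −b_{n+1}`, and
`P(n,k) = 0` for `1 ≤ k ≤ n`. -/
theorem production_matrix_appell
    (b : ℕ → ℤ) (hb : b 0 = 1)
    (N : ℕ → ℕ → ℤ) (hNlt : ∀ n k, n < k → N n k = 0)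
    (hAN : ∀ n k, matMul (toeplitz b) N n k = matI n k)
    (hNA : ∀ n k, matMul N (toeplitz b) n k = matI n k) :
    (∀ n, matMul (matMul (toeplitz b) shiftU) N n (n + 1) = 1) ∧
    (∀ n, matMul (matMul (toeplitz b) shiftU) N n 0 = -b (n + 1)) ∧
    (∀ n k, 1 ≤ k → k ≤ n → matMul (matMul (toeplitz b) shiftU) N n k = 0) := by
  have hN00 : N 0 0 = 1 := by
    have := hNA 0 0
    unfold matMul toeplitz matI at this
    simp [Finset.sum_range_succ, hb, hNlt 0 1 (by norm_num)] at this
    exact this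
  refine ⟨fun n => ?_, fun n => ?_, fun n k hk1 hkn => ?_⟩
  · rw [key b N hAN, hNlt 0 (n + 1) (Nat.succ_pos n)]
    unfold matI; simp
  · rw [key b N hAN, hN00]
    unfold matI; simp
  · rw [key b N hAN, hNlt 0 k (by omega)]
    unfold matI
    rw [if_neg (by omega)]
    ring
end

section
/- Main proposition: Let f(x) = a₀ + a₁x + ... be a formal power series over ℤ with a₀ = 1. Let A be the lower-triangular Toeplitz matrix of 1 − x f(x), and let V be the matrix with V(j+1, j) = −j for all j ∈ ℕ and 0 elsewhere. Set M = (A + V)⁻¹ and P_M = M⁻¹ U M. Then P_M − M = A_U − W, where A_U denotes the matrix with first column a₀, a₁, a₂, ... and with 1's on the superdiagonal and zeros elsewhere (i.e. (A_U)(n,0) = a_n, (A_U)(n, n+1) = 1, else 0), and W(0,0) = 1 with all other entries 0. Equivalently, P_M and M agree in all entries (n,k) with 1 ≤ k ≤ n, and (P_M)(n,0) − M(n,0) = a_n − (if n = 0 then 1 else 0), (P_M)(n, n+1) = 1. -/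
/-- The matrix `V` with `V(j+1, j) = −j` and zero elsewhere. -/
def matV : ℕ → ℕ → ℤ := fun i j => if i = j + 1 then -(j : ℤ) else 0

/-- The matrix `W` with a single `1` in position `(0,0)`. -/
def matW : ℕ → ℕ → ℤ := fun i j => if i = 0 ∧ j = 0 then 1 else 0

/-- The lower-triangular Toeplitz matrix of the series `1 − x·f(x)` where
`f(x) = a₀ + a₁x + ⋯`. -/
def toeplitzOneSubXF (a : ℕ → ℤ) : ℕ → ℕ → ℤ :=
  fun n k => if k = n then 1 else if k < n then -a (n - k - 1) else 0

lemma aux_hP (a : ℕ → ℤ) (M : ℕ → ℕ → ℤ) (n k : ℕ) :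
    matMul (matMul (fun n k => toeplitzOneSubXF a n k + matV n k) shiftU) M n k
      = ∑ i ∈ Finset.range (n+1), (toeplitzOneSubXF a n i + matV n i) * M (i+1) k := by
  simp only [matMul, Finset.sum_mul]
  rw [Finset.sum_comm]
  have inner : ∀ i ∈ Finset.range (n+2),
      ∑ j ∈ Finset.range (n+2), (toeplitzOneSubXF a n i + matV n i) * shiftU i j * M j k
        = if i + 1 ∈ Finset.range (n+2) then
            (toeplitzOneSubXF a n i + matV n i) * M (i+1) k else 0 := by
    intro i _
    rw [← Finset.sum_ite_eq' (Finset.range (n+2)) (i+1)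
      (fun j => (toeplitzOneSubXF a n i + matV n i) * M j k)]
    refine Finset.sum_congr rfl fun j _ => ?_
    simp only [shiftU, mul_ite, mul_one, mul_zero, ite_mul, zero_mul]
  rw [Finset.sum_congr rfl inner, Finset.sum_range_succ]
  simp only [Finset.mem_range]
  rw [if_neg (by omega), add_zero]
  refine Finset.sum_congr rfl fun i hi => ?_
  rw [Finset.mem_range] at hi
  rw [if_pos (by omega)]

lemma aux_hM0 (a : ℕ → ℤ) (M : ℕ → ℕ → ℤ)
    (hLM : ∀ n k, matMul (fun n k => toeplitzOneSubXF a n k + matV n k) M n k = matI n k)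
    (k : ℕ) : M 0 k = matI 0 k := by
  have h := hLM 0 k
  simp [matMul, Finset.sum_range_succ, toeplitzOneSubXF, matV] at h
  exact h

lemma aux_hrec (a : ℕ → ℤ) (ha : a 0 = 1) (M : ℕ → ℕ → ℤ)
    (hLM : ∀ n k, matMul (fun n k => toeplitzOneSubXF a n k + matV n k) M n k = matI n k)
    (m k : ℕ) :
    M (m+1) k = matI (m+1) k + (∑ i ∈ Finset.range (m+1), a (m-i) * M i k)
      + (m : ℤ) * M m k := by
  have h := hLM (m+1) k
  rw [matMul, Finset.sum_range_succ, Finset.sum_range_succ, Finset.sum_range_succ] at h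
  have e1 : toeplitzOneSubXF a (m+1) (m+1) + matV (m+1) (m+1) = 1 := by
    simp [toeplitzOneSubXF, matV]
  have e2 : toeplitzOneSubXF a (m+1) (m+2) + matV (m+1) (m+2) = 0 := by
    simp [toeplitzOneSubXF, matV]
  have e3 : toeplitzOneSubXF a (m+1) m + matV (m+1) m = -1 - m := by
    simp [toeplitzOneSubXF, matV, ha]; ring
  have e4 : ∑ j ∈ Finset.range m, (toeplitzOneSubXF a (m+1) j + matV (m+1) j) * M j k
      = -∑ j ∈ Finset.range m, a (m-j) * M j k := by
    rw [← Finset.sum_neg_distrib]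
    refine Finset.sum_congr rfl fun j hj => ?_
    rw [Finset.mem_range] at hj
    have h1 : j ≠ m + 1 := by omega
    have h2 : j < m + 1 := by omega
    have h3 : ¬ (m + 1 = j + 1) := by omega
    have h4 : m + 1 - j - 1 = m - j := by omega
    simp [toeplitzOneSubXF, matV, h1, h2, h3, h4]; rw [if_neg (by omega)]; ring
  rw [e1, e2, e3, e4] at h
  rw [Finset.sum_range_succ, Nat.sub_self, ha]
  linear_combination h

/-- Main proposition: with `a₀ = 1`, `L = A + V` (where `A` is the Toeplitz matrix of
`1 − x f(x)`), and `M = L⁻¹`, the production matrix `P_M = L·U·M` satisfies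
`P_M − M = A_U − W`, where `A_U` has first column `a₀, a₁, …`, ones on the
superdiagonal and zeros elsewhere. -/
theorem almost_own_production_matrix
    (a : ℕ → ℤ) (ha : a 0 = 1)
    (M : ℕ → ℕ → ℤ) (hMlt : ∀ n k, n < k → M n k = 0)
    (hLM : ∀ n k, matMul (fun n k => toeplitzOneSubXF a n k + matV n k) M n k = matI n k)
    (hML : ∀ n k, matMul M (fun n k => toeplitzOneSubXF a n k + matV n k) n k = matI n k) :
    ∀ n k,
      matMul (matMul (fun n k => toeplitzOneSubXF a n k + matV n k) shiftU) M n k - M n k =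
        ((if k = 0 then a n else 0) + (if k = n + 1 then 1 else 0)) - matW n k := by
  intro n k
  rcases n with _ | m
  · -- n = 0
    have h0 := aux_hM0 a M hLM
    rw [aux_hP, Finset.sum_range_succ, Finset.sum_range_zero, zero_add,
      aux_hrec a ha M hLM 0 k]
    simp only [toeplitzOneSubXF, matV, matI, matW, ha, Finset.sum_range_succ,
      Finset.sum_range_zero, h0, Nat.sub_zero, Nat.sub_self]
    norm_num
    split <;> split <;> simp_all
  · -- n = m+1
    have hsplit : ∑ i ∈ Finset.range (m+1),
        (toeplitzOneSubXF a (m+1) i + matV (m+1) i) * M (i+1) k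
        = -(∑ i ∈ Finset.range m, a (m-i) * M (i+1) k) + (-1 - m) * M (m+1) k := by
      rw [Finset.sum_range_succ]
      have e3 : toeplitzOneSubXF a (m+1) m + matV (m+1) m = -1 - m := by
        simp [toeplitzOneSubXF, matV, ha]; ring
      rw [e3]
      congr 1
      rw [← Finset.sum_neg_distrib]
      refine Finset.sum_congr rfl fun j hj => ?_
      rw [Finset.mem_range] at hj
      have h1 : j ≠ m + 1 := by omega
      have h2 : j < m + 1 := by omega
      have h3 : ¬ (m + 1 = j + 1) := by omega
      have h4 : m + 1 - j - 1 = m - j := by omega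
      simp [toeplitzOneSubXF, matV, h1, h2, h3, h4]; rw [if_neg (by omega)]; ring
    have hS : ∑ i ∈ Finset.range (m+2), a (m+1-i) * M i k
        = (∑ i ∈ Finset.range m, a (m-i) * M (i+1) k) + M (m+1) k
          + a (m+1) * matI 0 k := by
      rw [Finset.sum_range_succ']
      simp only [Nat.succ_sub_succ]
      rw [Finset.sum_range_succ, Nat.sub_self, ha, aux_hM0 a M hLM k]
      simp only [Nat.sub_zero]
      ring
    have ediag : toeplitzOneSubXF a (m+1) (m+1) + matV (m+1) (m+1) = 1 := by
      simp [toeplitzOneSubXF, matV]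
    have hPval : matMul (matMul (fun n k => toeplitzOneSubXF a n k + matV n k) shiftU)
        M (m+1) k = matI (m+2) k + a (m+1) * matI 0 k + M (m+1) k := by
      rw [aux_hP, Finset.sum_range_succ, ediag, one_mul, aux_hrec a ha M hLM (m+1) k,
        hsplit, hS]
      push_cast
      ring
    rw [hPval]
    have hW : matW (m+1) k = 0 := by simp [matW]
    rw [hW]
    simp only [matI]
    split <;> split <;> simp_all <;> omega
end

section
/- For the triangle M with entries M(n,k) = n!/k! (k ≤ n, else 0), the production matrix P_M = M⁻¹·U·M satisfies P_M(n,k) = n!/k! for k ≤ n, P_M(n, n+1) = 1, and P_M(n,k) = 0 for k > n+1; that is, P_M = M + U. -/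
/-- Row-finite product of rational matrices indexed by ℕ × ℕ: all matrices in play
have row `n` supported in `{0, ..., n+1}`, so the truncated sum is exact. -/
def matMulQ (A B : ℕ → ℕ → ℚ) : ℕ → ℕ → ℚ :=
  fun n k => ∑ j ∈ Finset.range (n + 2), A n j * B j k

/-- The shift matrix `U`. -/
def shiftUQ : ℕ → ℕ → ℚ := fun i j => if j = i + 1 then 1 else 0

/-- The triangle A094587, with entries `n!/k!` for `k ≤ n`. -/
def factTri : ℕ → ℕ → ℚ :=
  fun n k => if k ≤ n then (Nat.factorial n : ℚ) / (Nat.factorial k : ℚ) else 0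

lemma N_eq (N : ℕ → ℕ → ℚ)
    (hMN : ∀ n k, matMulQ factTri N n k = if n = k then 1 else 0) :
    ∀ n k, N n k = if k = n then 1 else if k + 1 = n then -(n:ℚ) else 0 := by
  intro n
  induction n using Nat.strong_induction_on with
  | _ n ih =>
    intro k
    have h := hMN n k
    unfold matMulQ at h
    rw [Finset.sum_range_succ, Finset.sum_range_succ] at h
    have h1 : factTri n (n+1) = 0 := by simp [factTri]
    have h2 : factTri n n = 1 := by
      simp [factTri, div_self (by positivity : ((Nat.factorial n : ℚ)) ≠ 0)]
    rw [h1, h2] at h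
    simp only [zero_mul, add_zero, one_mul] at h
    have hfk : (Nat.factorial k : ℚ) ≠ 0 := by positivity
    have hsum : ∑ j ∈ Finset.range n, factTri n j * N j k
        = (if k ∈ Finset.range n then (n.factorial:ℚ)/(k.factorial:ℚ) else 0)
          - (if (k+1) ∈ Finset.range n then (n.factorial:ℚ)/(k.factorial:ℚ) else 0) := by
      rw [← Finset.sum_ite_eq' (Finset.range n) k fun _ => (n.factorial:ℚ)/(k.factorial:ℚ),
        ← Finset.sum_ite_eq' (Finset.range n) (k+1) fun _ => (n.factorial:ℚ)/(k.factorial:ℚ),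
        ← Finset.sum_sub_distrib]
      refine Finset.sum_congr rfl fun j hj => ?_
      have hjn : j < n := Finset.mem_range.mp hj
      rw [ih j hjn k]
      rcases eq_or_ne j k with rfl | hjk
      · have : j ≠ j + 1 := by omega
        simp [factTri, Nat.le_of_lt hjn, this]
      · rcases eq_or_ne j (k+1) with rfl | hjk1
        · have hk1 : k ≠ k + 1 := by omega
          have hft : factTri n (k+1) = (n.factorial:ℚ)/((k+1).factorial:ℚ) := by
            simp [factTri, Nat.le_of_lt hjn]
          rw [hft, if_neg hk1, if_pos rfl, if_neg (Ne.symm hk1), Nat.factorial_succ]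
          push_cast
          field_simp
          simp only [if_true]
          field_simp
          ring
        · have hk : k ≠ j := Ne.symm hjk
          have hk1 : k + 1 ≠ j := Ne.symm hjk1
          simp [hk, hk1, hjk, hjk1]
    rw [hsum] at h
    simp only [Finset.mem_range] at h
    have key : N n k = (if n = k then (1:ℚ) else 0)
        - (if k < n then (n.factorial:ℚ)/(k.factorial:ℚ) else 0)
        + (if k + 1 < n then (n.factorial:ℚ)/(k.factorial:ℚ) else 0) := by linarith [h]
    rw [key]
    rcases eq_or_ne k n with rfl | e1
    · simp [(by omega : ¬ k + 1 < k)]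
    · rcases eq_or_ne (k+1) n with e2 | e2
      · have hval : (n.factorial:ℚ)/(k.factorial:ℚ) = (n:ℚ) := by
          subst e2
          rw [Nat.factorial_succ]
          push_cast
          field_simp
        rw [if_neg (Ne.symm e1), if_pos (show k < n by omega),
          if_neg (show ¬ k + 1 < n by omega), hval, if_neg e1, if_pos e2]
        ring
      · rcases lt_or_ge k n with hlt | hle
        · rw [if_neg (Ne.symm e1), if_pos hlt, if_pos (show k + 1 < n by omega),
            if_neg e1, if_neg e2]
          ring
        · rw [if_neg (Ne.symm e1), if_neg (show ¬ k < n by omega),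
            if_neg (show ¬ k + 1 < n by omega), if_neg e1, if_neg e2]
          ring

/-- For the triangle `M(n,k) = n!/k!`, the production matrix `P_M = M⁻¹·U·M`
equals `M + U`. -/
theorem production_matrix_factorial_triangle
    (N : ℕ → ℕ → ℚ) (hNlt : ∀ n k, n < k → N n k = 0)
    (hNM : ∀ n k, matMulQ N factTri n k = if n = k then 1 else 0)
    (hMN : ∀ n k, matMulQ factTri N n k = if n = k then 1 else 0) :
    ∀ n k, matMulQ (matMulQ N shiftUQ) factTri n k = factTri n k + shiftUQ n k := by
  intro n k
  have hN := N_eq N hMN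
  have hinner : ∀ j, (∑ i ∈ Finset.range (n+2), N n i * shiftUQ i j)
      = if j = n + 1 then 1 else if j = n then -(n:ℚ) else 0 := by
    intro j
    unfold shiftUQ
    cases j with
    | zero =>
      rcases eq_or_ne n 0 with rfl | h
      · simp
      · simp [Ne.symm h]
    | succ t =>
      have hterm : ∀ i ∈ Finset.range (n+2),
          N n i * (if (t+1 : ℕ) = i + 1 then (1:ℚ) else 0)
          = if i = t then N n t else 0 := by
        intro i _
        rcases eq_or_ne i t with rfl | hit
        · simp
        · have : (t+1 : ℕ) ≠ i + 1 := by omega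
          simp [this, hit]
          exact fun h => absurd h.symm hit
      rw [Finset.sum_congr rfl hterm,
        Finset.sum_ite_eq' (Finset.range (n+2)) t fun _ => N n t]
      rcases lt_or_ge t (n+2) with hlt | hge
      · rw [if_pos (Finset.mem_range.mpr hlt), hN n t]
        rcases eq_or_ne t n with rfl | htn
        · simp [(by omega : ¬ t + 1 = t)]
        · rcases eq_or_ne (t+1) n with ht1 | ht1
          · have hne : (t+1:ℕ) ≠ n + 1 := by omega
            simp [htn, ht1, hne, (by omega : t + 1 = n)]
          · rcases eq_or_ne t (n+1) with rfl | h2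
            · simp [htn, ht1]
            · have a1 : (t+1:ℕ) ≠ n+1 := by omega
              have a2 : (t+1:ℕ) ≠ n := by omega
              simp [htn, ht1, a1, a2]
      · rw [if_neg (by simp; omega)]
        have a1 : (t+1:ℕ) ≠ n+1 := by omega
        have a2 : (t+1:ℕ) ≠ n := by omega
        simp [a1, a2]
        omega
  show (∑ j ∈ Finset.range (n+2),
      (∑ i ∈ Finset.range (n+2), N n i * shiftUQ i j) * factTri j k)
      = factTri n k + shiftUQ n k
  rw [Finset.sum_congr rfl (fun j _ => by rw [hinner j])]
  rw [Finset.sum_range_succ, Finset.sum_range_succ]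
  have hzero : ∑ j ∈ Finset.range n,
      (if j = n + 1 then (1:ℚ) else if j = n then -(n:ℚ) else 0) * factTri j k = 0 := by
    apply Finset.sum_eq_zero
    intro j hj
    have := Finset.mem_range.mp hj
    rw [if_neg (by omega : ¬ j = n + 1), if_neg (by omega : ¬ j = n), zero_mul]
  rw [hzero, zero_add, if_neg (show ¬ n = n + 1 by omega), if_pos rfl, if_pos rfl, one_mul]
  -- goal : -(n) * factTri n k + factTri (n+1) k = factTri n k + shiftUQ n k
  unfold factTri shiftUQ
  rcases le_or_gt k n with hk | hk
  · rw [if_pos hk, if_pos (by omega : k ≤ n + 1), if_neg (by omega : ¬ k = n + 1),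
      Nat.factorial_succ]
    push_cast
    have hfk : (Nat.factorial k : ℚ) ≠ 0 := by positivity
    field_simp
    ring
  · rcases eq_or_ne k (n+1) with rfl | hk1
    · rw [if_neg (by omega : ¬ n + 1 ≤ n), if_pos le_rfl, if_pos rfl]
      have hne : (Nat.factorial (n+1) : ℚ) ≠ 0 := by positivity
      field_simp
      ring
    · rw [if_neg (by omega : ¬ k ≤ n), if_neg (by omega : ¬ k ≤ n + 1), if_neg hk1]
      ring
end

section
/- Generalized recurrence-to-closed-form: for f(x) = 1/(1 − r x) (so a_n = rⁿ), the first column m_n of M = ((1 − x f(x), x) + V)⁻¹ satisfies m₀ = 1 and, for n ≥ 1, m_n = Σ_{k=0}^{n−1} C(n−1, k)·(n−k)!·r^k. Verify for r = 2 and 0 ≤ n ≤ 6 that this gives 1, 1, 4, 18, 92, 536, 3552 and that these equal the corresponding entries M(n,0) of the inverse matrix. -/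
/-- The Toeplitz matrix of `1 − x·f(x)` for `f(x) = 1/(1 − r x)`:
unit diagonal and entries `−r^{n−k−1}` below the diagonal. -/
def toepGeom (r : ℤ) : ℕ → ℕ → ℤ :=
  fun n k => if k = n then 1 else if k < n then -(r ^ (n - k - 1)) else 0

def sS (r : ℤ) (m : ℕ) : ℤ :=
  ∑ k ∈ Finset.range (m+1), (m.choose k : ℤ) * ((m+1-k).factorial : ℤ) * r ^ k

def uU (r : ℤ) (m : ℕ) : ℤ :=
  ∑ k ∈ Finset.range (m+1), (m.choose k : ℤ) * ((m-k).factorial : ℤ) * r ^ k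

lemma sS_zero (r : ℤ) : sS r 0 = 1 := by simp [sS]

lemma uU_zero (r : ℤ) : uU r 0 = 1 := by simp [uU]

lemma uU_succ (r : ℤ) (m : ℕ) : uU r (m+1) = r * uU r m + sS r m := by
  have h1 : uU r (m+1)
      = (∑ k ∈ Finset.range (m+1),
          ((m+1).choose (k+1) : ℤ) * ((m-k).factorial : ℤ) * r ^ (k+1))
        + ((m+1).factorial : ℤ) := by
    rw [uU, Finset.sum_range_succ']
    simp
  have h2 : sS r m
      = (∑ k ∈ Finset.range m,
          ((m).choose (k+1) : ℤ) * ((m-k).factorial : ℤ) * r ^ (k+1))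
        + ((m+1).factorial : ℤ) := by
    rw [sS, Finset.sum_range_succ']
    simp [Nat.succ_sub_succ]
  have h3 : ∑ k ∈ Finset.range (m+1),
        ((m).choose (k+1) : ℤ) * ((m-k).factorial : ℤ) * r ^ (k+1)
      = ∑ k ∈ Finset.range m,
        ((m).choose (k+1) : ℤ) * ((m-k).factorial : ℤ) * r ^ (k+1) := by
    rw [Finset.sum_range_succ, Nat.choose_succ_self]
    simp
  have h4 : r * uU r m = ∑ k ∈ Finset.range (m+1),
      ((m).choose k : ℤ) * ((m-k).factorial : ℤ) * r ^ (k+1) := by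
    rw [uU, Finset.mul_sum]
    apply Finset.sum_congr rfl
    intro k _
    ring
  rw [h1, h2, h4, ← h3]
  have : ∀ k ∈ Finset.range (m+1),
      ((m+1).choose (k+1) : ℤ) * ((m-k).factorial : ℤ) * r ^ (k+1)
      = (m.choose k : ℤ) * ((m-k).factorial : ℤ) * r ^ (k+1)
        + (m.choose (k+1) : ℤ) * ((m-k).factorial : ℤ) * r ^ (k+1) := by
    intro k _
    rw [Nat.choose_succ_succ']
    push_cast
    ring
  rw [Finset.sum_congr rfl this, Finset.sum_add_distrib]
  ring

lemma sS_succ (r : ℤ) (m : ℕ) :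
    sS r (m+1) = ((m:ℤ)+1) * sS r m + uU r (m+1) := by
  have key : ∀ k ∈ Finset.range (m+1),
      ((m+1).choose k : ℤ) * ((m+2-k).factorial : ℤ) * r ^ k
      = ((m:ℤ)+1) * ((m.choose k : ℤ) * ((m+1-k).factorial : ℤ) * r ^ k)
        + ((m+1).choose k : ℤ) * ((m+1-k).factorial : ℤ) * r ^ k := by
    intro k hk
    have hk' : k ≤ m := by
      simpa [Nat.lt_succ_iff] using hk
    have h1 : m + 2 - k = (m + 1 - k) + 1 := by omega
    have h2 : ((m+1).choose k : ℤ) * ((m+1-k : ℕ) : ℤ)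
        = (m.choose k : ℤ) * ((m:ℤ)+1) := by
      exact_mod_cast congrArg (fun x : ℕ => (x : ℤ)) (Nat.choose_mul_succ_eq m k).symm
    rw [h1, Nat.factorial_succ]
    push_cast [Nat.cast_sub (by omega : k ≤ m + 1)]
    push_cast [Nat.cast_sub (by omega : k ≤ m + 1)] at h2
    linear_combination ((Nat.factorial (m+1-k) : ℤ) * r ^ k) * h2
  rw [sS, sS, uU, Finset.sum_range_succ, Finset.sum_range_succ (n := m+1),
    Finset.sum_congr rfl key, Finset.sum_add_distrib, Finset.mul_sum]
  simp [Nat.factorial]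
  ring

/-- For `f(x) = 1/(1 − r x)` and `M = ((1 − x f(x), x) + V)⁻¹`, the first column
satisfies `m₀ = 1` and `mₙ = Σ_{k=0}^{n−1} C(n−1,k)(n−k)! rᵏ` for `n ≥ 1`;
for `r = 2` this gives `1, 1, 4, 18, 92, 536, 3552` (A081923). -/
theorem first_column_geometric_case (r : ℤ) (M : ℕ → ℕ → ℤ)
    (hMlt : ∀ n k, n < k → M n k = 0)
    (hLM : ∀ n k, matMul (fun n k => toepGeom r n k + matV n k) M n k = matI n k)
    (hML : ∀ n k, matMul M (fun n k => toepGeom r n k + matV n k) n k = matI n k) :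
    M 0 0 = 1 ∧
    (∀ n, 1 ≤ n → M n 0 =
      ∑ k ∈ Finset.range n, ((n - 1).choose k : ℤ) * (Nat.factorial (n - k) : ℤ) * r ^ k) ∧
    (r = 2 → M 0 0 = 1 ∧ M 1 0 = 1 ∧ M 2 0 = 4 ∧ M 3 0 = 18 ∧ M 4 0 = 92 ∧
      M 5 0 = 536 ∧ M 6 0 = 3552) := by
  have hM00 : M 0 0 = 1 := by
    have h := hLM 0 0
    simp [matMul, matI, Finset.sum_range_succ, toepGeom, matV] at h
    exact h
  have hrec : ∀ m : ℕ, M (m+1) 0 =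
      (∑ j ∈ Finset.range (m+1), r ^ (m - j) * M j 0) + (m : ℤ) * M m 0 := by
    intro m
    have h := hLM (m+1) 0
    rw [matMul] at h
    rw [Finset.sum_range_succ, Finset.sum_range_succ] at h
    have e1 : (toepGeom r (m+1) (m+1) + matV (m+1) (m+1)) = 1 := by
      simp [toepGeom, matV]
    have e2 : (toepGeom r (m+1) (m+2) + matV (m+1) (m+2)) = 0 := by
      simp [toepGeom, matV]
    have hs : ∀ j ∈ Finset.range (m+1),
        (toepGeom r (m+1) j + matV (m+1) j) * M j 0
        = -(r ^ (m - j) * M j 0) + (if m+1 = j+1 then -(j:ℤ) else 0) * M j 0 := by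
      intro j hj
      have hj' : j < m+1 := Finset.mem_range.mp hj
      rw [toepGeom]
      simp only [matV]
      rw [if_neg (by omega), if_pos hj']
      have : m + 1 - j - 1 = m - j := by omega
      rw [this]; ring
    rw [Finset.sum_congr rfl hs, Finset.sum_add_distrib] at h
    have h2 : ∑ j ∈ Finset.range (m+1), (if m+1 = j+1 then -(j:ℤ) else 0) * M j 0
        = -(m:ℤ) * M m 0 := by
      rw [Finset.sum_range_succ, if_pos rfl]
      have : ∀ j ∈ Finset.range m, (if m+1 = j+1 then -(j:ℤ) else 0) * M j 0 = 0 := by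
        intro j hj
        rw [if_neg (by have := Finset.mem_range.mp hj; omega)]; ring
      rw [Finset.sum_congr rfl this]
      simp
    rw [h2, e1, e2] at h
    have h3 : matI (m+1) 0 = 0 := by simp [matI]
    rw [h3] at h
    have h4 : ∑ j ∈ Finset.range (m+1), -(r ^ (m - j) * M j 0)
        = -∑ j ∈ Finset.range (m+1), r ^ (m - j) * M j 0 := by
      simp
    rw [h4] at h
    linarith
  have main : ∀ m : ℕ, M (m+1) 0 = sS r m ∧
      (∑ j ∈ Finset.range (m+1), r ^ (m - j) * M j 0) = uU r m := by
    intro m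
    induction m with
    | zero =>
      constructor
      · rw [hrec 0]; simp [hM00, sS_zero]
      · simp [hM00, uU_zero]
    | succ m ih =>
      obtain ⟨ih1, ih2⟩ := ih
      have hU : (∑ j ∈ Finset.range (m+2), r ^ (m+1-j) * M j 0) = uU r (m+1) := by
        rw [Finset.sum_range_succ]
        have hc : ∀ j ∈ Finset.range (m+1),
            r ^ (m+1-j) * M j 0 = r * (r ^ (m-j) * M j 0) := by
          intro j hj
          have : m+1-j = (m-j)+1 := by
            have := Finset.mem_range.mp hj; omega
          rw [this, pow_succ]; ring
        rw [Finset.sum_congr rfl hc, ← Finset.mul_sum, ih2, ih1, uU_succ]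
        simp
      refine ⟨?_, hU⟩
      rw [hrec (m+1), hU, ih1, sS_succ]
      push_cast
      ring
  refine ⟨hM00, ?_, ?_⟩
  · intro n hn
    obtain ⟨m, rfl⟩ : ∃ m, n = m+1 := ⟨n-1, by omega⟩
    rw [(main m).1, sS]
    apply Finset.sum_congr (by norm_num)
    intro k hk
    norm_num
  · intro hr
    subst hr
    refine ⟨hM00, ?_, ?_, ?_, ?_, ?_, ?_⟩ <;>
      first
        | (rw [(main 0).1]; norm_num [sS, Finset.sum_range_succ, Nat.factorial, Nat.choose])
        | (rw [(main 1).1]; norm_num [sS, Finset.sum_range_succ, Nat.factorial, Nat.choose])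
        | (rw [(main 2).1]; norm_num [sS, Finset.sum_range_succ, Nat.factorial, Nat.choose])
        | (rw [(main 3).1]; norm_num [sS, Finset.sum_range_succ, Nat.factorial, Nat.choose])
        | (rw [(main 4).1]; norm_num [sS, Finset.sum_range_succ, Nat.factorial, Nat.choose])
        | (rw [(main 5).1]; norm_num [sS, Finset.sum_range_succ, Nat.factorial, Nat.choose])
end
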